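/- Let μ be a finite positive Borel measure on [0,∞) and define η : ℝ → ℝ₊ by η(x) = ∫_0^∞ e^{−t x²} μ(dt). Then for every m ∈ ℕ* and x ∈ ℝ, η*_m(x) := (−1)^{m−1} Σ_{j=1}^m c_{j,m} x^j η^{(j)}(x) ≥ 0, where c_{j,m} are the coefficients defined by c_{1,1} = −1 and c_{j,m} = (2j/(m−1) − 4) c_{j,m−1} 1_{j<m} + (2/(m−1)) c_{j−1,m−1} 1_{j>1}. -/

import Mathlib

open MeasureTheory

/-- The coefficients `c_{j,m}`: `c_{1,1} = −1` and for `m ≥ 2`,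
`c_{j,m} = (2j/(m−1) − 4)·c_{j,m−1}·1_{j<m} + (2/(m−1))·c_{j−1,m−1}·1_{j>1}`. -/
noncomputable def cCoef : ℕ → ℕ → ℝ
  | _, 0 => 0
  | j, 1 => if j = 1 then -1 else 0
  | j, m + 2 =>
      (if j < m + 2 then (2 * (j : ℝ) / ((m : ℝ) + 1) - 4) * cCoef j (m + 1) else 0)
      + (if 1 < j then 2 / ((m : ℝ) + 1) * cCoef (j - 1) (m + 1) else 0)

namespace Stmt19Aux

open Polynomial Finset

noncomputable def g (t x : ℝ) : ℝ := Real.exp (-t * x ^ 2)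

lemma contDiff_g (t : ℝ) : ContDiff ℝ (⊤ : ℕ∞) (g t) :=
  Real.contDiff_exp.comp (contDiff_const.mul (contDiff_id.pow 2))

noncomputable def f (j : ℕ) (t x : ℝ) : ℝ := iteratedDeriv j (g t) x

lemma f_zero (t x : ℝ) : f 0 t x = g t x := by simp [f]

lemma f_diff (j : ℕ) (t : ℝ) : Differentiable ℝ (f j t) :=
  (contDiff_g t).differentiable_iteratedDeriv j (by exact_mod_cast ENat.natCast_lt_top j)

lemma f_hasDerivAt (j : ℕ) (t x : ℝ) : HasDerivAt (f j t) (f (j + 1) t x) x := by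
  have h := ((f_diff j t) x).hasDerivAt
  rwa [show f (j + 1) t x = deriv (f j t) x from by simp only [f, iteratedDeriv_succ]; rfl]

lemma hasDerivAt_g (t x : ℝ) : HasDerivAt (g t) (-(2 * t * x) * g t x) x := by
  have h : HasDerivAt (fun y : ℝ => -t * y ^ 2) (-t * (2 * x ^ 1)) x :=
    (hasDerivAt_pow 2 x).const_mul (-t)
  have h2 := h.exp
  have : Real.exp (-t * x ^ 2) * (-t * (2 * x ^ 1)) = -(2 * t * x) * g t x := by
    simp [g]; ring
  rw [this] at h2; exact h2

lemma f_one (t x : ℝ) : f 1 t x = -(2 * t * x) * g t x := by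
  rw [show f 1 t x = deriv (f 0 t) x from by simp only [f, iteratedDeriv_succ]; rfl]
  have : f 0 t = g t := funext (f_zero t)
  rw [this]
  exact (hasDerivAt_g t x).deriv

noncomputable def Kc (m : ℕ) (t : ℝ) : ℝ :=
  (-1) ^ (m - 1) * (2 ^ (m - 1) / (Nat.factorial (m - 1))) * (2 * t) ^ m

lemma gauss_sum (t : ℝ) (m : ℕ) (hm : 1 ≤ m) (x : ℝ) :
    ∑ j ∈ Icc 1 m, cCoef j m * x ^ j * f j t x = Kc m t * x ^ (2 * m) * g t x := by
  induction m, hm using Nat.le_induction generalizing x with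
  | base =>
    rw [Finset.Icc_self, Finset.sum_singleton]
    have hc : cCoef 1 1 = -1 := by simp [cCoef]
    rw [hc, f_one, Kc]
    norm_num; ring
  | succ m hm ih =>
    obtain ⟨k, rfl⟩ : ∃ k, m = k + 1 := ⟨m - 1, (Nat.succ_pred_eq_of_pos hm).symm⟩
    have hD : HasDerivAt (fun y => ∑ j ∈ Icc 1 (k + 1), cCoef j (k + 1) * y ^ j * f j t y)
        (∑ j ∈ Icc 1 (k + 1), cCoef j (k + 1) *
          ((j * x ^ (j - 1)) * f j t x + x ^ j * f (j + 1) t x)) x := by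
      apply HasDerivAt.fun_sum
      intro j _
      have h1 : HasDerivAt (fun y : ℝ => y ^ j * f j t y)
          ((j * x ^ (j - 1)) * f j t x + x ^ j * f (j + 1) t x) x :=
        (hasDerivAt_pow j x).mul (f_hasDerivAt j t x)
      simpa [mul_assoc] using h1.const_mul (cCoef j (k + 1))
    have hfun : (fun y => ∑ j ∈ Icc 1 (k + 1), cCoef j (k + 1) * y ^ j * f j t y)
        = fun y => Kc (k + 1) t * y ^ (2 * (k + 1)) * g t y := funext fun y => ih y
    have hE : HasDerivAt (fun y => Kc (k + 1) t * y ^ (2 * (k + 1)) * g t y)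
        (Kc (k + 1) t * (((2 * (k + 1) : ℕ) : ℝ) * x ^ (2 * (k + 1) - 1) * g t x
          + x ^ (2 * (k + 1)) * (-(2 * t * x) * g t x))) x := by
      simpa [mul_assoc] using
        ((hasDerivAt_pow (2 * (k + 1)) x).mul (hasDerivAt_g t x)).const_mul (Kc (k + 1) t)
    have hDE : (∑ j ∈ Icc 1 (k + 1), cCoef j (k + 1) *
          ((j * x ^ (j - 1)) * f j t x + x ^ j * f (j + 1) t x))
        = Kc (k + 1) t * (((2 * (k + 1) : ℕ) : ℝ) * x ^ (2 * (k + 1) - 1) * g t x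
          + x ^ (2 * (k + 1)) * (-(2 * t * x) * g t x)) := by
      have h1 := hfun ▸ hD
      exact h1.unique hE
    have hsplit : ∀ j ∈ Icc 1 (k + 2), cCoef j (k + 2) * x ^ j * f j t x
        = (if j < k + 2 then
            (2 * (j : ℝ) / ((k : ℝ) + 1) - 4) * cCoef j (k + 1) * x ^ j * f j t x else 0)
          + (if 1 < j then
            2 / ((k : ℝ) + 1) * cCoef (j - 1) (k + 1) * x ^ j * f j t x else 0) := by
      intro j _
      show cCoef j (k + 2) * x ^ j * f j t x = _
      rw [cCoef]
      simp only [add_mul, ite_mul, zero_mul]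
    rw [Finset.sum_congr rfl hsplit, Finset.sum_add_distrib]
    have hA : (∑ j ∈ Icc 1 (k + 2), if j < k + 2 then
          (2 * (j : ℝ) / ((k : ℝ) + 1) - 4) * cCoef j (k + 1) * x ^ j * f j t x else 0)
        = ∑ j ∈ Icc 1 (k + 1),
          (2 * (j : ℝ) / ((k : ℝ) + 1) - 4) * cCoef j (k + 1) * x ^ j * f j t x := by
      rw [← Finset.sum_subset (Finset.Icc_subset_Icc_right (Nat.le_succ (k + 1)))
        (fun j hj hj' => by
          rw [if_neg]
          simp only [Finset.mem_Icc] at hj hj'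
          omega)]
      exact Finset.sum_congr rfl fun j hj => by
        rw [if_pos]
        simp only [Finset.mem_Icc] at hj
        omega
    have hB : (∑ j ∈ Icc 1 (k + 2), if 1 < j then
          2 / ((k : ℝ) + 1) * cCoef (j - 1) (k + 1) * x ^ j * f j t x else 0)
        = ∑ j ∈ Icc 1 (k + 1),
          2 / ((k : ℝ) + 1) * cCoef j (k + 1) * x ^ (j + 1) * f (j + 1) t x := by
      rw [← Finset.sum_subset (show Icc 2 (k + 2) ⊆ Icc 1 (k + 2) from
          Finset.Icc_subset_Icc_left (by omega))
        (fun j hj hj' => by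
          rw [if_neg]
          simp only [Finset.mem_Icc] at hj hj'
          omega)]
      rw [show (2 : ℕ) = 1 + 1 from rfl, show k + 2 = (k + 1) + 1 from rfl,
        ← Finset.map_add_right_Icc, Finset.sum_map]
      refine Finset.sum_congr rfl fun j hj => ?_
      simp only [Finset.mem_Icc] at hj
      rw [if_pos (by simp [addRightEmbedding]; omega)]
      simp [addRightEmbedding]
    rw [hA, hB]
    have key : (∑ j ∈ Icc 1 (k + 1),
          (2 * (j : ℝ) / ((k : ℝ) + 1) - 4) * cCoef j (k + 1) * x ^ j * f j t x)
        + (∑ j ∈ Icc 1 (k + 1),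
          2 / ((k : ℝ) + 1) * cCoef j (k + 1) * x ^ (j + 1) * f (j + 1) t x)
        = 2 / ((k : ℝ) + 1) * x * (∑ j ∈ Icc 1 (k + 1), cCoef j (k + 1) *
            ((j * x ^ (j - 1)) * f j t x + x ^ j * f (j + 1) t x))
          - 4 * ∑ j ∈ Icc 1 (k + 1), cCoef j (k + 1) * x ^ j * f j t x := by
      rw [Finset.mul_sum, Finset.mul_sum, ← Finset.sum_sub_distrib, ← Finset.sum_add_distrib]
      refine Finset.sum_congr rfl fun j hj => ?_
      simp only [Finset.mem_Icc] at hj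
      obtain ⟨i, rfl⟩ : ∃ i, j = i + 1 := ⟨j - 1, by omega⟩
      have hk : ((k : ℝ) + 1) ≠ 0 := by positivity
      simp only [Nat.add_sub_cancel]
      push_cast
      field_simp
      ring
    rw [key, hDE, ih x]
    have hk : ((k : ℝ) + 1) ≠ 0 := by positivity
    have hfact : ((k + 1).factorial : ℝ) ≠ 0 := by
      exact_mod_cast (Nat.factorial_pos (k + 1)).ne'
    simp only [Kc, Nat.add_sub_cancel]
    rw [show 2 * (k + 1) - 1 = 2 * k + 1 from by omega,
      show 2 * (k + 1) = 2 * k + 2 from by omega,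
      show 2 * (k + 2) = 2 * k + 4 from by omega,
      Nat.factorial_succ]
    push_cast
    field_simp
    ring

noncomputable def phi (j : ℕ) (t x : ℝ) : ℝ :=
  Real.sqrt (2 * t) ^ j *
    ((-1 : ℝ) ^ j * aeval (Real.sqrt (2 * t) * x) (hermite j)) * Real.exp (-t * x ^ 2)

lemma f_eq_phi (j : ℕ) {t : ℝ} (ht : 0 ≤ t) (x : ℝ) : f j t x = phi j t x := by
  rcases eq_or_lt_of_le ht with h | h
  · subst h
    have hg : g 0 = fun _ : ℝ => (1 : ℝ) := by funext y; simp [g]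
    cases j with
    | zero => simp [f, phi, hg]
    | succ n =>
      rw [f, hg, phi]
      have : iteratedDeriv (n + 1) (fun _ : ℝ => (1 : ℝ)) = fun _ => 0 := by
        induction n with
        | zero => simp [iteratedDeriv_one]
        | succ k ihk =>
          rw [iteratedDeriv_succ, ihk]
          simp
      simp [this]
  · set c := Real.sqrt (2 * t) with hc
    have hc2 : c ^ 2 = 2 * t := Real.sq_sqrt (by linarith)
    have hg : g t = fun y => Real.exp (-((c * y) ^ 2 / 2)) := by
      funext y; rw [g]; congr 1; rw [mul_pow, hc2]; ring
    have hcd : ContDiff ℝ j (fun y : ℝ => Real.exp (-(y ^ 2 / 2))) :=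
      (Real.contDiff_exp.comp (((contDiff_id.pow 2).div_const 2).neg)).of_le le_top
    rw [f, hg, iteratedDeriv_comp_const_mul hcd c]
    simp only [iteratedDeriv_eq_iterate]
    rw [Polynomial.deriv_gaussian_eq_hermite_mul_gaussian]
    rw [phi]
    have : Real.exp (-((c * x) ^ 2 / 2)) = Real.exp (-t * x ^ 2) := by
      congr 1; rw [mul_pow, hc2]; ring
    rw [this]
    ring

lemma phi_cont (j : ℕ) (x : ℝ) : Continuous fun t => phi j t x := by
  have hc : Continuous fun t : ℝ => Real.sqrt (2 * t) :=
    Real.continuous_sqrt.comp (continuous_const.mul continuous_id)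
  exact ((hc.pow j).mul (continuous_const.mul
      ((hermite j).continuous_aeval.comp (hc.mul continuous_const)))).mul
    (Real.continuous_exp.comp ((continuous_neg.comp continuous_id).mul continuous_const))

lemma aux_exp_bound (kk : ℕ) {s : ℝ} (hs : 0 ≤ s) :
    (1 + s) ^ kk ≤ 2 ^ kk * (1 + (kk.factorial : ℝ)) * Real.exp s := by
  have hf : (0 : ℝ) ≤ (kk.factorial : ℝ) := Nat.cast_nonneg _
  have he : 1 ≤ Real.exp s := Real.one_le_exp hs
  have hmax : (max 1 s) ^ kk ≤ (1 + (kk.factorial : ℝ)) * Real.exp s := by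
    rcases le_total s 1 with h | h
    · rw [max_eq_left h, one_pow]; nlinarith
    · rw [max_eq_right h]
      have := Real.pow_div_factorial_le_exp s hs kk
      have hfp : (0 : ℝ) < (kk.factorial : ℝ) := by exact_mod_cast kk.factorial_pos
      have h2 : s ^ kk ≤ (kk.factorial : ℝ) * Real.exp s := by
        rw [div_le_iff₀ hfp] at this; linarith [this]
      nlinarith
  calc (1 + s) ^ kk ≤ (2 * max 1 s) ^ kk := by
        apply pow_le_pow_left₀ (by positivity)
        rcases le_total s 1 with h | h
        · rw [max_eq_left h]; linarith
        · rw [max_eq_right h]; linarith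
    _ = 2 ^ kk * (max 1 s) ^ kk := by rw [mul_pow]
    _ ≤ 2 ^ kk * ((1 + (kk.factorial : ℝ)) * Real.exp s) := by
        exact mul_le_mul_of_nonneg_left hmax (by positivity)
    _ = 2 ^ kk * (1 + (kk.factorial : ℝ)) * Real.exp s := by ring

lemma f_bound (j : ℕ) {a R : ℝ} (ha : 0 < a) :
    ∃ C : ℝ, ∀ t y : ℝ, 0 ≤ t → a ≤ y ^ 2 → |y| ≤ R → |f j t y| ≤ C := by
  classical
  set R' := max 1 R with hR'
  set M := max 1 (2 / a) with hMdef
  set B : ℝ := R' ^ j * (2 ^ j * (M ^ j * (2 ^ j * (1 + (j.factorial : ℝ))))) with hB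
  refine ⟨(∑ i ∈ range (j + 1), |((hermite j).coeff i : ℝ)|) * B, ?_⟩
  intro t y ht hay hyR
  have hR1 : (1 : ℝ) ≤ R' := le_max_left _ _
  have hM1 : (1 : ℝ) ≤ M := le_max_left _ _
  have hM2 : 2 / a ≤ M := le_max_right _ _
  have hyR' : |y| ≤ R' := le_trans hyR (le_max_right _ _)
  set c := Real.sqrt (2 * t) with hc
  have hc0 : 0 ≤ c := Real.sqrt_nonneg _
  have hc2 : c ^ 2 = 2 * t := Real.sq_sqrt (by linarith)
  set E := Real.exp (-t * y ^ 2) with hE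
  have hE0 : 0 < E := Real.exp_pos _
  have hEle : E ≤ Real.exp (-(t * a)) := by
    apply Real.exp_le_exp.2; nlinarith
  rw [f_eq_phi j ht]
  have habs : |phi j t y| = c ^ j * |aeval (c * y) (hermite j)| * E := by
    rw [phi, abs_mul, abs_mul, abs_mul, abs_pow, abs_pow, abs_neg, abs_one, one_pow, one_mul,
      abs_of_nonneg hc0, ← hE, Real.abs_exp]
  have hA : |aeval (c * y) (hermite j)| ≤
      ∑ i ∈ range (j + 1), |((hermite j).coeff i : ℝ)| * |c * y| ^ i := by
    rw [Polynomial.aeval_eq_sum_range' (n := j + 1) (by rw [natDegree_hermite]; omega)]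
    refine le_trans (Finset.abs_sum_le_sum_abs _ _) ?_
    refine Finset.sum_le_sum fun i _ => ?_
    rw [zsmul_eq_mul, abs_mul, abs_pow]
  have hcore : (1 + 2 * t) ^ j * E ≤ M ^ j * (2 ^ j * (1 + (j.factorial : ℝ))) := by
    have h4 : 1 + 2 * t ≤ M * (1 + t * a) := by
      have h2a : 2 / a * (t * a) = 2 * t := by field_simp
      have := mul_le_mul_of_nonneg_right hM2 (mul_nonneg ht ha.le)
      rw [h2a] at this
      nlinarith
    calc (1 + 2 * t) ^ j * E ≤ (1 + 2 * t) ^ j * Real.exp (-(t * a)) :=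
          mul_le_mul_of_nonneg_left hEle (pow_nonneg (by linarith) j)
      _ ≤ (M * (1 + t * a)) ^ j * Real.exp (-(t * a)) :=
          mul_le_mul_of_nonneg_right (pow_le_pow_left₀ (by linarith) h4 j) (Real.exp_pos _).le
      _ = M ^ j * ((1 + t * a) ^ j * Real.exp (-(t * a))) := by rw [mul_pow]; ring
      _ ≤ M ^ j * ((2 ^ j * (1 + (j.factorial : ℝ)) * Real.exp (t * a)) * Real.exp (-(t * a))) := by
          refine mul_le_mul_of_nonneg_left (mul_le_mul_of_nonneg_right
            (aux_exp_bound j (mul_nonneg ht ha.le)) (Real.exp_pos _).le) (by positivity)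
      _ = M ^ j * (2 ^ j * (1 + (j.factorial : ℝ))) := by
          rw [mul_assoc (2 ^ j * (1 + (j.factorial : ℝ))), ← Real.exp_add]
          simp
  have key : ∀ i ∈ range (j + 1), |c * y| ^ i * (c ^ j * E) ≤ B := by
    intro i hi
    have hij : i ≤ j := by simpa [Nat.lt_succ_iff] using hi
    have hyj : |y| ^ i ≤ R' ^ j :=
      le_trans (pow_le_pow_left₀ (abs_nonneg y) hyR' i) (pow_le_pow_right₀ hR1 hij)
    have hcpow : c ^ (i + j) ≤ 2 ^ j * (1 + 2 * t) ^ j := by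
      calc c ^ (i + j) ≤ (1 + c) ^ (i + j) := pow_le_pow_left₀ hc0 (by linarith) _
        _ ≤ (1 + c) ^ (2 * j) := pow_le_pow_right₀ (by linarith) (by omega)
        _ = ((1 + c) ^ 2) ^ j := by rw [← pow_mul]
        _ ≤ (2 * (1 + 2 * t)) ^ j :=
            pow_le_pow_left₀ (by positivity) (by nlinarith [sq_nonneg (1 - c), hc2]) j
        _ = 2 ^ j * (1 + 2 * t) ^ j := mul_pow _ _ _
    have hc4 : c ^ (i + j) * E ≤ 2 ^ j * (M ^ j * (2 ^ j * (1 + (j.factorial : ℝ)))) := by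
      calc c ^ (i + j) * E ≤ (2 ^ j * (1 + 2 * t) ^ j) * E :=
            mul_le_mul_of_nonneg_right hcpow hE0.le
        _ = 2 ^ j * ((1 + 2 * t) ^ j * E) := by ring
        _ ≤ 2 ^ j * (M ^ j * (2 ^ j * (1 + (j.factorial : ℝ)))) :=
            mul_le_mul_of_nonneg_left hcore (by positivity)
    calc |c * y| ^ i * (c ^ j * E) = |y| ^ i * (c ^ (i + j) * E) := by
          rw [abs_mul, abs_of_nonneg hc0, mul_pow, pow_add]; ring
      _ ≤ R' ^ j * (2 ^ j * (M ^ j * (2 ^ j * (1 + (j.factorial : ℝ))))) :=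
          mul_le_mul hyj hc4 (mul_nonneg (pow_nonneg hc0 _) hE0.le) (by positivity)
      _ = B := by rw [hB]
  calc |phi j t y| = c ^ j * |aeval (c * y) (hermite j)| * E := habs
    _ ≤ c ^ j * (∑ i ∈ range (j + 1), |((hermite j).coeff i : ℝ)| * |c * y| ^ i) * E := by
        refine mul_le_mul_of_nonneg_right (mul_le_mul_of_nonneg_left hA (pow_nonneg hc0 _)) hE0.le
    _ = ∑ i ∈ range (j + 1), |((hermite j).coeff i : ℝ)| * (|c * y| ^ i * (c ^ j * E)) := by
        rw [Finset.mul_sum, Finset.sum_mul]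
        exact Finset.sum_congr rfl fun i _ => by ring
    _ ≤ ∑ i ∈ range (j + 1), |((hermite j).coeff i : ℝ)| * B :=
        Finset.sum_le_sum fun i hi => mul_le_mul_of_nonneg_left (key i hi) (abs_nonneg _)
    _ = (∑ i ∈ range (j + 1), |((hermite j).coeff i : ℝ)|) * B := by rw [Finset.sum_mul]

end Stmt19Aux

open Stmt19Aux in
/-- If `η(x) = ∫_0^∞ e^{−t x²} μ(dt)` for a finite positive Borel measure `μ` on
`[0,∞)`, then `η*_m(x) = (−1)^{m−1} Σ_{j=1}^m c_{j,m} x^j η^{(j)}(x) ≥ 0` for every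
`m ≥ 1` and `x ∈ ℝ`. -/
theorem stmt_19 (μ : Measure ℝ) [IsFiniteMeasure μ] (hsupp : μ (Set.Iio 0) = 0)
    (η : ℝ → ℝ) (hrep : ∀ x : ℝ, η x = ∫ t, Real.exp (-t * x ^ 2) ∂μ)
    (m : ℕ) (hm : 1 ≤ m) (x : ℝ) :
    0 ≤ (-1 : ℝ) ^ (m - 1) *
        ∑ j ∈ Finset.Icc 1 m, cCoef j m * x ^ j * iteratedDeriv j η x := by
  rcases eq_or_ne x 0 with rfl | hx
  · have hz : ∑ j ∈ Finset.Icc 1 m, cCoef j m * (0 : ℝ) ^ j * iteratedDeriv j η 0 = 0 := by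
      refine Finset.sum_eq_zero fun j hj => ?_
      simp only [Finset.mem_Icc] at hj
      rw [zero_pow (by omega : j ≠ 0)]
      ring
    rw [hz, mul_zero]
  · have hae : ∀ᵐ t ∂μ, (0 : ℝ) ≤ t := by
      rw [MeasureTheory.ae_iff]
      have : {a : ℝ | ¬(0 : ℝ) ≤ a} = Set.Iio 0 := by ext a; simp
      rw [this]; exact hsupp
    have hmeas : ∀ (j : ℕ) (y : ℝ), AEStronglyMeasurable (fun t => f j t y) μ := fun j y =>
      ((phi_cont j y).aestronglyMeasurable).congr
        (hae.mono fun t ht => (f_eq_phi j ht y).symm)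
    have hint : ∀ (j : ℕ) (y : ℝ), y ≠ 0 → Integrable (fun t => f j t y) μ := by
      intro j y hy
      obtain ⟨C, hC⟩ := f_bound j (a := y ^ 2) (R := |y|) (by positivity)
      refine (integrable_const C).mono' (hmeas j y) ?_
      exact hae.mono fun t ht => by
        simpa [Real.norm_eq_abs] using hC t y ht le_rfl le_rfl
    have hderiv : ∀ (j : ℕ) (y : ℝ), y ≠ 0 → iteratedDeriv j η y = ∫ t, f j t y ∂μ := by
      intro j
      induction j with
      | zero => intro y _; simpa [f, g] using hrep y
      | succ j ih =>
        intro y hy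
        have hy2 : (0 : ℝ) < |y| := abs_pos.2 hy
        obtain ⟨C, hC⟩ := f_bound (j + 1) (a := y ^ 2 / 4) (R := 2 * |y|) (by positivity)
        have main := hasDerivAt_integral_of_dominated_loc_of_deriv_le
          (μ := μ) (F := fun z t => f j t z) (F' := fun z t => f (j + 1) t z)
          (x₀ := y) (bound := fun _ => C) (Metric.ball_mem_nhds y (half_pos hy2))
          (Filter.Eventually.of_forall fun z => hmeas j z) (hint j y hy) (hmeas (j + 1) y)
          (hae.mono fun t ht z hz => by
            have hdist : |z - y| < |y| / 2 := by
              rw [← Real.dist_eq]; exact Metric.mem_ball.1 hz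
            have h3 : |y| / 2 ≤ |z| := by
              have h := abs_sub_abs_le_abs_sub y z
              rw [abs_sub_comm y z] at h
              linarith
            have h4 : |z| ≤ 2 * |y| := by
              have h := abs_sub_abs_le_abs_sub z y
              linarith
            have h5 : y ^ 2 / 4 ≤ z ^ 2 := by
              nlinarith [sq_abs z, sq_abs y, abs_nonneg y, abs_nonneg z]
            simpa [Real.norm_eq_abs] using hC t z ht h5 h4)
          (integrable_const C)
          (Filter.Eventually.of_forall fun t z _ => f_hasDerivAt j t z)
        rw [iteratedDeriv_succ]
        have hev : iteratedDeriv j η =ᶠ[nhds y] fun z => ∫ t, f j t z ∂μ := by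
          filter_upwards [eventually_ne_nhds hy] with z hz using ih z hz
        rw [hev.deriv_eq, main.2.deriv]
    have hsum : ∑ j ∈ Finset.Icc 1 m, cCoef j m * x ^ j * iteratedDeriv j η x
        = ∫ t, ∑ j ∈ Finset.Icc 1 m, cCoef j m * x ^ j * f j t x ∂μ := by
      rw [integral_finset_sum _ (fun j _ => (hint j x hx).const_mul (cCoef j m * x ^ j))]
      exact Finset.sum_congr rfl fun j _ => by
        rw [hderiv j x hx, ← MeasureTheory.integral_const_mul]
    rw [hsum,
      integral_congr_ae (Filter.Eventually.of_forall fun t => gauss_sum t m hm x),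
      ← MeasureTheory.integral_const_mul]
    apply integral_nonneg_of_ae
    filter_upwards [hae] with t ht
    have hneg : ((-1 : ℝ) ^ (m - 1)) * ((-1 : ℝ) ^ (m - 1)) = 1 := by
      rw [← pow_add]; exact Even.neg_one_pow ⟨m - 1, rfl⟩
    have heq : (-1 : ℝ) ^ (m - 1) * (Kc m t * x ^ (2 * m) * g t x)
        = (2 ^ (m - 1) / ((m - 1).factorial : ℝ)) * (2 * t) ^ m * x ^ (2 * m) * g t x := by
      rw [Kc]
      calc (-1 : ℝ) ^ (m - 1) * ((-1) ^ (m - 1) * (2 ^ (m - 1) / ((m - 1).factorial : ℝ))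
            * (2 * t) ^ m * x ^ (2 * m) * g t x)
          = (((-1 : ℝ) ^ (m - 1)) * ((-1 : ℝ) ^ (m - 1))) *
            ((2 ^ (m - 1) / ((m - 1).factorial : ℝ)) * (2 * t) ^ m * x ^ (2 * m) * g t x) := by
            ring
        _ = _ := by rw [hneg, one_mul]
    rw [heq]
    have h1 : (0 : ℝ) ≤ (2 * t) ^ m := pow_nonneg (by linarith) m
    have h2 : (0 : ℝ) ≤ x ^ (2 * m) := by
      rw [pow_mul]; positivity
    have h3 : (0 : ℝ) ≤ g t x := (Real.exp_pos _).le
    have h0 : (0 : ℝ) ≤ 2 ^ (m - 1) / ((m - 1).factorial : ℝ) := by positivity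
    exact mul_nonneg (mul_nonneg (mul_nonneg h0 h1) h2) h3
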